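/- arXiv:1703.07228 — 4 statements merged into one kernel-verified Lean document; each statement's English description precedes it below -/
import Mathlib

section
/- Let A : V₁ → V₂ be a bounded linear map of Hilbert spaces that is surjective. Then the minimum reduced modulus γ(A) := inf over ξ ∉ ker A of ‖Aξ‖ / dist(ξ, ker A) satisfies γ(A)⁻² = ‖(A A*)⁻¹‖, where A A* is invertible on V₂. -/
/-!
Surjectivity of `A` makes `A†` bounded below (open mapping theorem), so `A A†` is coercive and
hence invertible, say with inverse `B`. Then `S = A† B` is a right inverse of `A` with range in
`(ker A)ᗮ`, so `ξ - S (A ξ)` is the orthogonal projection of `ξ` onto `ker A` and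
`dist(ξ, ker A) = ‖S (A ξ)‖`. Hence `γ(A) = inf_{y ≠ 0} ‖y‖ / ‖S y‖ = ‖S‖⁻¹`, while the
C⋆-identity gives `‖S‖² = ‖S† S‖ = ‖B†‖ = ‖B‖`.
-/

open Metric ContinuousLinearMap
open scoped InnerProduct InnerProductSpace

section Normed

variable {𝕜 E F : Type*} [NontriviallyNormedField 𝕜] [NormedAddCommGroup E] [NormedSpace 𝕜 E]
  [NormedAddCommGroup F] [NormedSpace 𝕜 F]

theorem ContinuousLinearMap.sInf_norm_div_norm_apply_eq_inv_norm (S : F →L[𝕜] E)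
    (hS : Function.Injective S) :
    sInf {r : ℝ | ∃ y : F, y ≠ 0 ∧ r = ‖y‖ / ‖S y‖} = ‖S‖⁻¹ := by
  set R := {r : ℝ | ∃ y : F, y ≠ 0 ∧ r = ‖y‖ / ‖S y‖}
  rcases subsingleton_or_nontrivial F with hF | hF
  · have hempty : R = ∅ :=
      Set.eq_empty_of_forall_notMem fun r ⟨y, hy, _⟩ => hy (Subsingleton.elim y 0)
    rw [hempty, Real.sInf_empty, Subsingleton.elim S 0, norm_zero, inv_zero]
  obtain ⟨y₀, hy₀⟩ := exists_ne (0 : F)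
  have hSy : ∀ y, y ≠ 0 → 0 < ‖S y‖ := fun y hy =>
    norm_pos_iff.2 ((map_ne_zero_iff S hS).2 hy)
  have hSpos : 0 < ‖S‖ := norm_pos_iff.2 fun h => (hSy y₀ hy₀).ne' (by simp [h])
  have hlow : ‖S‖⁻¹ ≤ sInf R := by
    refine le_csInf ⟨_, y₀, hy₀, rfl⟩ ?_
    rintro r ⟨y, hy, rfl⟩
    rw [le_div_iff₀ (hSy y hy), inv_mul_le_iff₀ hSpos]
    exact S.le_opNorm y
  have hγ : 0 < sInf R := (inv_pos.2 hSpos).trans_le hlow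
  have hbdd : BddBelow R := ⟨0, by rintro r ⟨y, -, rfl⟩; positivity⟩
  refine le_antisymm ((le_inv_comm₀ hγ hSpos).2 ?_) hlow
  refine S.opNorm_le_bound (inv_nonneg.2 hγ.le) fun y => ?_
  rcases eq_or_ne y 0 with rfl | hy
  · simp
  rw [← div_le_iff₀' (inv_pos.2 hγ), div_inv_eq_mul, ← le_div_iff₀' (hSy y hy)]
  exact csInf_le hbdd ⟨y, hy, rfl⟩

noncomputable def ContinuousLinearMap.reducedMinimumModulus (A : E →L[𝕜] F) : ℝ :=
  sInf {r : ℝ | ∃ ξ : E, ξ ∉ LinearMap.ker (A : E →ₗ[𝕜] F) ∧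
    r = ‖A ξ‖ / infDist ξ (LinearMap.ker (A : E →ₗ[𝕜] F) : Set E)}

end Normed

section InnerProduct

variable {𝕜 E F : Type*} [RCLike 𝕜] [NormedAddCommGroup E] [InnerProductSpace 𝕜 E]
  [NormedAddCommGroup F] [InnerProductSpace 𝕜 F]

theorem Submodule.infDist_eq_norm_of_sub_mem_of_mem_orthogonal (K : Submodule 𝕜 E) {ξ v : E}
    (hξv : ξ - v ∈ K) (hv : v ∈ Kᗮ) : infDist ξ K = ‖v‖ := by
  have hmin : ‖ξ - (ξ - v)‖ = ⨅ w : K, ‖ξ - w‖ :=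
    (K.norm_eq_iInf_iff_inner_eq_zero hξv).2 fun w hw => by
      rw [sub_sub_cancel]; exact (K.mem_orthogonal' v).1 hv w hw
  rw [infDist_eq_iInf, ← sub_sub_cancel ξ v, hmin]
  simp only [dist_eq_norm]
  rfl

theorem ContinuousLinearMap.reducedMinimumModulus_eq_inv_norm (A : E →L[𝕜] F) (S : F →L[𝕜] E)
    (hAS : ∀ y, A (S y) = y) (hS : ∀ y, S y ∈ (LinearMap.ker (A : E →ₗ[𝕜] F))ᗮ) :
    A.reducedMinimumModulus = ‖S‖⁻¹ := by
  have hdist : ∀ ξ, infDist ξ (LinearMap.ker (A : E →ₗ[𝕜] F) : Set E) = ‖S (A ξ)‖ := fun ξ =>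
    Submodule.infDist_eq_norm_of_sub_mem_of_mem_orthogonal _
      (show A (ξ - S (A ξ)) = 0 by rw [map_sub, hAS, sub_self]) (hS _)
  rw [← S.sInf_norm_div_norm_apply_eq_inv_norm (Function.LeftInverse.injective hAS),
    reducedMinimumModulus]
  congr 1
  ext r
  constructor
  · rintro ⟨ξ, hξ, rfl⟩
    exact ⟨A ξ, hξ, by rw [hdist]⟩
  · rintro ⟨y, hy, rfl⟩
    refine ⟨S y, ?_, by rw [hdist, hAS]⟩
    rwa [LinearMap.mem_ker, coe_coe, hAS]

variable [CompleteSpace E] [CompleteSpace F]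

theorem ContinuousLinearMap.adjoint_apply_mem_orthogonal_ker (A : E →L[𝕜] F) (y : F) :
    (A†) y ∈ (LinearMap.ker (A : E →ₗ[𝕜] F))ᗮ :=
  (Submodule.mem_orthogonal' _ _).2 fun k hk => by
    rw [adjoint_inner_left, show A k = 0 from hk, inner_zero_right]

theorem ContinuousLinearMap.exists_norm_le_mul_norm_adjoint_apply (A : E →L[𝕜] F)
    (hA : Function.Surjective A) : ∃ C > 0, ∀ y, ‖y‖ ≤ C * ‖(A†) y‖ := by
  obtain ⟨C, hC, hpre⟩ := A.exists_preimage_norm_le hA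
  refine ⟨C, hC, fun y => ?_⟩
  obtain ⟨x, rfl, hx⟩ := hpre y
  rcases eq_or_ne (A x) 0 with h | h
  · rw [h, norm_zero]; positivity
  refine le_of_mul_le_mul_right ?_ (norm_pos_iff.2 h)
  calc ‖A x‖ * ‖A x‖ = RCLike.re ⟪A x, A x⟫_𝕜 := by rw [inner_self_eq_norm_mul_norm]
    _ = RCLike.re ⟪(A†) (A x), x⟫_𝕜 := by rw [adjoint_inner_left]
    _ ≤ ‖(A†) (A x)‖ * ‖x‖ := re_inner_le_norm _ _
    _ ≤ ‖(A†) (A x)‖ * (C * ‖A x‖) := by gcongr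
    _ = C * ‖(A†) (A x)‖ * ‖A x‖ := by ring

theorem ContinuousLinearMap.isUnit_comp_adjoint (A : E →L[𝕜] F) (hA : Function.Surjective A) :
    IsUnit (A ∘L A†) := by
  obtain ⟨C, hC, hbound⟩ := A.exists_norm_le_mul_norm_adjoint_apply hA
  refine isUnit_of_forall_le_norm_inner_map _ (c := (C ^ 2)⁻¹.toNNReal)
    (Real.toNNReal_pos.2 (by positivity)) fun y => ?_
  have hinner : ⟪(A ∘L A†) y, y⟫_𝕜 = (‖(A†) y‖ ^ 2 : 𝕜) := by
    rw [comp_apply, ← adjoint_inner_right, inner_self_eq_norm_sq_to_K]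
  rw [hinner, Real.coe_toNNReal _ (by positivity), ← div_eq_mul_inv, div_le_iff₀ (by positivity)]
  simpa [mul_pow, mul_comm] using pow_le_pow_left₀ (norm_nonneg y) (hbound y) 2

theorem ContinuousLinearMap.sq_norm_adjoint_comp_eq_norm (A : E →L[𝕜] F) (B : F →L[𝕜] F)
    (hB : (A ∘L A†) ∘L B = .id 𝕜 F) : ‖A† ∘L B‖ ^ 2 = ‖B‖ := by
  calc ‖A† ∘L B‖ ^ 2 = ‖(A† ∘L B)† ∘L (A† ∘L B)‖ := by rw [norm_adjoint_comp_self, sq]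
    _ = ‖B† ∘L ((A ∘L A†) ∘L B)‖ := by rw [adjoint_comp, adjoint_adjoint]; rfl
    _ = ‖B‖ := by rw [hB, comp_id, LinearIsometryEquiv.norm_map]

end InnerProduct

/-- For a bounded surjective linear map `A : V₁ → V₂` of complex Hilbert spaces,
the minimum reduced modulus `γ(A) := inf_{ξ ∉ ker A} ‖Aξ‖ / dist(ξ, ker A)` satisfies
`γ(A)⁻² = ‖(A A*)⁻¹‖`; in particular `A A*` is invertible on `V₂`. -/
theorem stmt0
    {V₁ V₂ : Type*} [NormedAddCommGroup V₁] [InnerProductSpace ℂ V₁] [CompleteSpace V₁]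
    [NormedAddCommGroup V₂] [InnerProductSpace ℂ V₂] [CompleteSpace V₂]
    (A : V₁ →L[ℂ] V₂) (hA : Function.Surjective A)
    (γ : ℝ)
    (hγ : γ = sInf { r : ℝ | ∃ ξ : V₁, ξ ∉ LinearMap.ker (A : V₁ →ₗ[ℂ] V₂) ∧
        r = ‖A ξ‖ / Metric.infDist ξ (LinearMap.ker (A : V₁ →ₗ[ℂ] V₂) : Set V₁) }) :
    ∃ B : V₂ →L[ℂ] V₂,
      (A.comp (ContinuousLinearMap.adjoint A)).comp B = ContinuousLinearMap.id ℂ V₂ ∧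
      B.comp (A.comp (ContinuousLinearMap.adjoint A)) = ContinuousLinearMap.id ℂ V₂ ∧
      (γ ^ 2)⁻¹ = ‖B‖ := by
  obtain ⟨T, hT⟩ := A.isUnit_comp_adjoint hA
  have hTB : (A ∘L A†) ∘L ↑T⁻¹ = .id ℂ V₂ := hT ▸ T.mul_inv
  have hBT : ↑T⁻¹ ∘L (A ∘L A†) = .id ℂ V₂ := hT ▸ T.inv_mul
  have hγ' : γ = ‖A† ∘L ↑T⁻¹‖⁻¹ :=
    hγ.trans <| A.reducedMinimumModulus_eq_inv_norm _ (fun y => congr($hTB y))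
      fun y => A.adjoint_apply_mem_orthogonal_ker _
  exact ⟨_, hTB, hBT, by rw [hγ', inv_pow, inv_inv, A.sq_norm_adjoint_comp_eq_norm _ hTB]⟩
end

section
/- Let H be a Hilbert space with a continuous sesquilinear form B that is an inner product equivalent to the given one. Let W₁ ⊇ W₂ ⊇ ... be a decreasing sequence of closed subspaces with intersection W = ∩ₙ Wₙ. Let F ∈ H* and let uₙ ∈ Wₙ, w ∈ W be the unique elements with B(uₙ, v) = F(v) for all v ∈ Wₙ and B(w, v) = F(v) for all v ∈ W. Then uₙ → w in H. -/
open Filter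

/-- Let `H` be a complex Hilbert space and `B` a bounded, Hermitian, coercive
sesquilinear form (an inner product equivalent to the given one). Let `W₁ ⊇ W₂ ⊇ ...` be a
decreasing sequence of closed subspaces with intersection `W`, `F ∈ H*`, and let `uₙ ∈ Wₙ`
and `w ∈ W` be the solutions of `B(uₙ, v) = F(v)` for `v ∈ Wₙ` and `B(w, v) = F(v)` for
`v ∈ W`. Then `uₙ → w` in `H`. -/
theorem stmt8
    {H : Type*} [NormedAddCommGroup H] [InnerProductSpace ℂ H] [CompleteSpace H]
    (B : H → H → ℂ)
    (hadd₁ : ∀ u u' v, B (u + u') v = B u v + B u' v)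
    (hadd₂ : ∀ u v v', B u (v + v') = B u v + B u v')
    (hsmul₁ : ∀ (c : ℂ) u v, B (c • u) v = c * B u v)
    (hsmul₂ : ∀ (c : ℂ) u v, B u (c • v) = (starRingEnd ℂ) c * B u v)
    (hbdd : ∃ M : ℝ, ∀ u v, ‖B u v‖ ≤ M * ‖u‖ * ‖v‖)
    (c : ℝ) (hc : 0 < c) (hcoer : ∀ u, c * ‖u‖ ^ 2 ≤ (B u u).re)
    (hherm : ∀ u v, B u v = (starRingEnd ℂ) (B v u))
    (W : ℕ → Submodule ℂ H) (hWcl : ∀ n, IsClosed (W n : Set H))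
    (hWmono : ∀ n, W (n + 1) ≤ W n)
    (Winf : Submodule ℂ H) (hWinf : (Winf : Set H) = ⋂ n, (W n : Set H))
    (F : H → ℂ)
    (u : ℕ → H) (hu : ∀ n, u n ∈ W n) (huB : ∀ n, ∀ v ∈ W n, B (u n) v = F v)
    (w : H) (hwW : w ∈ Winf) (hwB : ∀ v ∈ Winf, B w v = F v) :
    Tendsto u atTop (nhds w) := by
  obtain ⟨M, hM⟩ := hbdd
  -- subtraction lemmas
  have hsub₁ : ∀ x y v, B (x - y) v = B x v - B y v := by
    intro x y v
    rw [sub_eq_add_neg, hadd₁, ← neg_one_smul ℂ y, hsmul₁]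
    ring
  have hsub₂ : ∀ x y v, B v (x - y) = B v x - B v y := by
    intro x y v
    rw [sub_eq_add_neg, hadd₂, ← neg_one_smul ℂ y, hsmul₂]
    simp only [map_neg, map_one]
    ring
  have hexp : ∀ x y, B (x - y) (x - y) = B x x - B x y - B y x + B y y := by
    intro x y
    rw [hsub₁, hsub₂, hsub₂]
    ring
  -- antitonicity of W
  have hWanti : ∀ n m, n ≤ m → W m ≤ W n := fun n m h =>
    antitone_nat_of_succ_le hWmono h
  set a : ℕ → ℝ := fun n => (B (u n) (u n)).re with ha
  have hself : ∀ x, ((starRingEnd ℂ) (B x x)) = B x x := by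
    intro x
    conv_rhs => rw [hherm]
  -- key inequality
  have key : ∀ n m, n ≤ m → c * ‖u n - u m‖ ^ 2 ≤ a n - a m := by
    intro n m hnm
    have hum : u m ∈ W n := hWanti n m hnm (hu m)
    have h1 : B (u n) (u m) = B (u m) (u m) := by
      rw [huB n (u m) hum, huB m (u m) (hu m)]
    have h2 : B (u m) (u n) = B (u m) (u m) := by
      rw [hherm (u m) (u n), h1, hself]
    have h3 : B (u n - u m) (u n - u m) = B (u n) (u n) - B (u m) (u m) := by
      rw [hexp, h1, h2]; ring
    have := hcoer (u n - u m)
    rw [h3] at this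
    simpa [a, Complex.sub_re] using this
  have ha_nonneg : ∀ n, 0 ≤ a n := fun n =>
    le_trans (by positivity) (hcoer (u n))
  have ha_anti : Antitone a := by
    intro n m hnm
    have := key n m hnm
    nlinarith [norm_nonneg (u n - u m), sq_nonneg ‖u n - u m‖]
  have ha_cauchy : CauchySeq a :=
    (tendsto_atTop_ciInf ha_anti ⟨0, fun x ⟨n, hn⟩ => hn ▸ ha_nonneg n⟩).cauchySeq
  -- u is Cauchy
  have hu_cauchy : CauchySeq u := by
    rw [Metric.cauchySeq_iff]
    intro ε hε
    obtain ⟨N, hN⟩ := Metric.cauchySeq_iff.mp ha_cauchy (c * ε ^ 2) (by positivity)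
    refine ⟨N, fun m hm n hn => ?_⟩
    have hkey : c * ‖u n - u m‖ ^ 2 < c * ε ^ 2 := by
      rcases le_total n m with h | h
      · have := key n m h
        have hd := hN n hn m hm
        rw [Real.dist_eq] at hd
        have : a n - a m ≤ |a n - a m| := le_abs_self _
        nlinarith [key n m h, hN n hn m hm, le_abs_self (a n - a m),
          abs_sub_comm (a n) (a m)]
      · have hd := hN m hm n hn
        rw [Real.dist_eq] at hd
        have hnorm : ‖u n - u m‖ = ‖u m - u n‖ := norm_sub_rev _ _
        rw [hnorm]
        nlinarith [key m n h, le_abs_self (a m - a n)]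
    have h2 : ‖u n - u m‖ ^ 2 < ε ^ 2 := by nlinarith
    rw [dist_eq_norm, norm_sub_rev]
    nlinarith [norm_nonneg (u n - u m)]
  obtain ⟨L, hL⟩ := cauchySeq_tendsto_of_complete hu_cauchy
  -- L ∈ Winf
  have hLW : ∀ n, L ∈ W n := by
    intro n
    exact (hWcl n).mem_of_tendsto hL
      (eventually_atTop.2 ⟨n, fun m hm => hWanti n m hm (hu m)⟩)
  have hLWinf : L ∈ Winf := by
    rw [← SetLike.mem_coe, hWinf]
    exact Set.mem_iInter.2 fun n => hLW n
  -- norm of difference tends to 0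
  have hdiff : Tendsto (fun m => ‖u m - L‖) atTop (nhds 0) :=
    tendsto_iff_norm_sub_tendsto_zero.mp hL
  -- B L v = F v for v ∈ Winf
  have hBL : ∀ v ∈ Winf, B L v = F v := by
    intro v hv
    have hv' : ∀ m, v ∈ W m := fun m => by
      have := hWinf ▸ (SetLike.mem_coe.mpr hv)
      exact Set.mem_iInter.mp this m
    have hconst : (fun m => B (u m) v) = fun _ => F v :=
      funext fun m => huB m v (hv' m)
    have htend : Tendsto (fun m => B (u m) v) atTop (nhds (B L v)) := by
      rw [tendsto_iff_norm_sub_tendsto_zero]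
      have hb : ∀ m, ‖B (u m) v - B L v‖ ≤ M * ‖u m - L‖ * ‖v‖ := by
        intro m
        have : B (u m) v - B L v = B (u m - L) v := (hsub₁ _ _ _).symm
        rw [this]
        exact hM _ _
      have hlim : Tendsto (fun m => M * ‖u m - L‖ * ‖v‖) atTop (nhds 0) := by
        have := (hdiff.const_mul M).mul_const ‖v‖
        simpa using this
      exact squeeze_zero (fun m => norm_nonneg _) hb hlim
    have : Tendsto (fun m : ℕ => F v) atTop (nhds (B L v)) := hconst ▸ htend
    exact tendsto_nhds_unique this tendsto_const_nhds
  -- L = w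
  have hLw : L = w := by
    have hmem : L - w ∈ Winf := Submodule.sub_mem _ hLWinf hwW
    have hzero : B (L - w) (L - w) = 0 := by
      rw [hsub₁, hBL _ hmem, hwB _ hmem]
      ring
    have := hcoer (L - w)
    rw [hzero] at this
    simp only [Complex.zero_re] at this
    have hx2 : ‖L - w‖ ^ 2 ≤ 0 := by
      by_contra h
      push_neg at h
      nlinarith [mul_pos hc h]
    have hx0 : ‖L - w‖ ^ 2 = 0 := le_antisymm hx2 (sq_nonneg _)
    have hn : ‖L - w‖ = 0 := by
      have := pow_eq_zero_iff (n := 2) (by norm_num) |>.mp hx0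
      exact this
    exact sub_eq_zero.mp (norm_eq_zero.mp hn)
  exact hLw ▸ hL
end

section
/- Let ω₁ ⊇ ω₂ ⊇ ... be closed bounded Lipschitz domains in ℝⁿ with G = ∩ₙ ωₙ a closed bounded Lipschitz domain. Then ∩ₙ H¹₀(ωₙ) = H¹₀(G), where each H¹₀ is viewed as a closed subspace of H¹(ℝⁿ) consisting of functions supported in the respective closed domain. -/
open MeasureTheory Filter
open scoped ENNReal

/-- A test function supported in the closed set `K ⊆ ℝⁿ`. -/
def TestSupportedIn {n : ℕ} (K : Set (EuclideanSpace ℝ (Fin n)))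
    (φ : EuclideanSpace ℝ (Fin n) → ℝ) : Prop :=
  ContDiff ℝ (⊤ : ℕ∞) φ ∧ HasCompactSupport φ ∧ tsupport φ ⊆ K

/-- `g` is the weak partial derivative of `u` on `ℝⁿ` in direction `i`. -/
def HasWeakPartialDerivAll {n : ℕ} (u g : EuclideanSpace ℝ (Fin n) → ℝ) (i : Fin n) : Prop :=
  ∀ φ : EuclideanSpace ℝ (Fin n) → ℝ, ContDiff ℝ (⊤ : ℕ∞) φ → HasCompactSupport φ →
    ∫ x, u x * fderiv ℝ φ x (EuclideanSpace.single i 1) = - ∫ x, g x * φ x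

/-- `u` (with weak gradient `g`) belongs to `H¹₀(K)`, the closure in `H¹(ℝⁿ)` of the smooth
compactly supported functions with support in the closed set `K`: there is a sequence of
test functions supported in `K` converging to `u` in the `H¹`-norm. -/
def MemH10 {n : ℕ} (K : Set (EuclideanSpace ℝ (Fin n)))
    (u : EuclideanSpace ℝ (Fin n) → ℝ)
    (g : Fin n → EuclideanSpace ℝ (Fin n) → ℝ) : Prop :=
  ∃ φ : ℕ → EuclideanSpace ℝ (Fin n) → ℝ,
    (∀ k, TestSupportedIn K (φ k)) ∧
    Tendsto (fun k => eLpNorm (u - φ k) 2 volume) atTop (nhds 0) ∧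
    ∀ i, Tendsto (fun k => eLpNorm
      (fun x => g i x - fderiv ℝ (φ k) x (EuclideanSpace.single i 1)) 2 volume)
      atTop (nhds 0)

/-- If `u` is an a.e. strongly measurable function which is the `L²` limit of functions
vanishing on a measurable set `S`, then `u` vanishes a.e. on `S`. -/
lemma ae_zero_on_of_tendsto {n : ℕ} {S : Set (EuclideanSpace ℝ (Fin n))}
    (hS : MeasurableSet S) {u : EuclideanSpace ℝ (Fin n) → ℝ}
    (hu : AEStronglyMeasurable u volume)
    {ψ : ℕ → EuclideanSpace ℝ (Fin n) → ℝ}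
    (hψ0 : ∀ j, ∀ x ∈ S, ψ j x = 0)
    (hconv : Tendsto (fun j => eLpNorm (fun x => u x - ψ j x) 2 volume) atTop (nhds 0)) :
    ∀ᵐ x ∂volume, x ∈ S → u x = 0 := by
  have hle : ∀ j, eLpNorm (S.indicator u) 2 volume
      ≤ eLpNorm (fun x => u x - ψ j x) 2 volume := by
    intro j
    apply eLpNorm_mono
    intro x
    by_cases hx : x ∈ S
    · simp [Set.indicator_of_mem hx, hψ0 j x hx]
    · simp [Set.indicator_of_notMem hx]
  have h0 : eLpNorm (S.indicator u) 2 volume = 0 :=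
    le_antisymm (ge_of_tendsto' hconv hle) zero_le
  have := (eLpNorm_eq_zero_iff (hu.indicator hS) (by norm_num)).mp h0
  filter_upwards [this] with x hx hxS
  simpa [Set.indicator_of_mem hxS] using hx

/-- Let `ω₁ ⊇ ω₂ ⊇ ⋯` be closed bounded Lipschitz domains in `ℝⁿ` with
`G = ∩ₙ ωₙ` a closed bounded Lipschitz domain. Then `∩ₙ H¹₀(ωₙ) = H¹₀(G)` inside `H¹(ℝⁿ)`.
(The Lipschitz-boundary assumption on `G` enters through its standard consequence `hKey`:
every `H¹(ℝⁿ)`-function supported a.e. in `G` lies in `H¹₀(G)`.) -/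
theorem stmt10 {n : ℕ}
    (ω : ℕ → Set (EuclideanSpace ℝ (Fin n)))
    (hωcl : ∀ k, IsClosed (ω k)) (hωbdd : ∀ k, Bornology.IsBounded (ω k))
    (hωmono : ∀ k, ω (k + 1) ⊆ ω k)
    (G : Set (EuclideanSpace ℝ (Fin n))) (hG : G = ⋂ k, ω k)
    (hKey : ∀ (u : EuclideanSpace ℝ (Fin n) → ℝ)
        (g : Fin n → EuclideanSpace ℝ (Fin n) → ℝ),
      MemLp u 2 volume → (∀ i, MemLp (g i) 2 volume) →
      (∀ i, HasWeakPartialDerivAll u (g i) i) →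
      (∀ᵐ x ∂volume, x ∉ G → u x = 0) →
      (∀ i, ∀ᵐ x ∂volume, x ∉ G → g i x = 0) →
      MemH10 G u g) :
    ∀ (u : EuclideanSpace ℝ (Fin n) → ℝ)
      (g : Fin n → EuclideanSpace ℝ (Fin n) → ℝ),
      MemLp u 2 volume → (∀ i, MemLp (g i) 2 volume) →
      (∀ i, HasWeakPartialDerivAll u (g i) i) →
      ((∀ k, MemH10 (ω k) u g) ↔ MemH10 G u g) := by
  intro u g hu hg hweak
  constructor
  · intro hall
    -- For each k, u and the g i vanish a.e. outside ω k
    have hvan : ∀ k, (∀ᵐ x ∂volume, x ∈ (ω k)ᶜ → u x = 0) ∧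
        (∀ i, ∀ᵐ x ∂volume, x ∈ (ω k)ᶜ → g i x = 0) := by
      intro k
      obtain ⟨φ, hφtest, hφu, hφg⟩ := hall k
      have hSmeas : MeasurableSet ((ω k)ᶜ) := (hωcl k).measurableSet.compl
      have hφ0 : ∀ j, ∀ x ∈ (ω k)ᶜ, φ j x = 0 := by
        intro j x hx
        exact image_eq_zero_of_notMem_tsupport fun h => hx ((hφtest j).2.2 h)
      constructor
      · exact ae_zero_on_of_tendsto hSmeas hu.aestronglyMeasurable hφ0
          (by exact hφu)
      · intro i
        have hdφ0 : ∀ j, ∀ x ∈ (ω k)ᶜ,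
            (fun y => fderiv ℝ (φ j) y (EuclideanSpace.single i 1)) x = 0 := by
          intro j x hx
          have hxts : x ∉ tsupport (φ j) := fun h => hx ((hφtest j).2.2 h)
          have : fderiv ℝ (φ j) x = 0 := by
            have hsub := support_fderiv_subset (𝕜 := ℝ) (f := φ j)
            by_contra hne
            exact hxts (hsub (by simpa using hne))
          simp [this]
        exact ae_zero_on_of_tendsto hSmeas (hg i).aestronglyMeasurable hdφ0 (hφg i)
    apply hKey u g hu hg hweak
    · have := ae_all_iff.mpr fun k => (hvan k).1
      filter_upwards [this] with x hx hxG
      rw [hG, Set.mem_iInter] at hxG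
      push_neg at hxG
      obtain ⟨k, hk⟩ := hxG
      exact hx k hk
    · intro i
      have := ae_all_iff.mpr fun k => (hvan k).2 i
      filter_upwards [this] with x hx hxG
      rw [hG, Set.mem_iInter] at hxG
      push_neg at hxG
      obtain ⟨k, hk⟩ := hxG
      exact hx k hk
  · intro hmem k
    obtain ⟨φ, hφtest, hφu, hφg⟩ := hmem
    refine ⟨φ, fun j => ⟨(hφtest j).1, (hφtest j).2.1, ?_⟩, hφu, hφg⟩
    refine ((hφtest j).2.2).trans ?_
    rw [hG]
    exact Set.iInter_subset ω k
end

section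
/- Let S be a compact metric space and suppose to each s ∈ S is assigned a pair of bounded operators D_s : X₁ → Y₁ and C_s : X₁ → Y₂ between Banach spaces, depending continuously on s in operator norm. Let X₀ be a Banach space with a continuous injection X₁ → X₀. Suppose that for each s ∈ S there is c_s > 0 with ‖w‖_{X₁} ≤ c_s(‖D_s w‖_{Y₁} + ‖w‖_{X₀} + ‖C_s w‖_{Y₂}) for all w ∈ X₁. Then there is a single constant c > 0 such that ‖w‖_{X₁} ≤ c(‖D_s w‖_{Y₁} + ‖w‖_{X₀} + ‖C_s w‖_{Y₂}) for all s ∈ S and all w ∈ X₁. -/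
open Filter Topology

/-!
A regularity estimate survives a perturbation of the operators that is small compared with the
inverse of its constant, at the price of doubling the constant. By norm continuity every `s ∈ S`
therefore has a neighbourhood on which `2 c_s` works, and finitely many of these neighbourhoods
cover the compact space `S`; the largest of the finitely many constants works everywhere.
-/

theorem CompactSpace.exists_forall_of_forall_eventually_nhds {S α : Type*} [TopologicalSpace S]
    [CompactSpace S] [Nonempty α] [Preorder α] [IsDirectedOrder α] {P : α → S → Prop}
    (hmono : ∀ s, Monotone (P · s)) (hloc : ∀ s, ∃ c, ∀ᶠ t in 𝓝 s, P c t) :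
    ∃ c, ∀ s, P c s := by
  choose c hc using hloc
  obtain ⟨I, hI⟩ := finite_cover_nhds hc
  obtain ⟨M, hM⟩ := ((eventually_all_finset I).2 fun s _ => eventually_ge_atTop (c s)).exists
  refine ⟨M, fun t => ?_⟩
  obtain ⟨s, hs, ht⟩ := Set.mem_iUnion₂.1 (hI.symm ▸ Set.mem_univ t)
  exact hmono t (hM s hs) ht

section RegularityEstimate

variable {𝕜 X W Y Z : Type*} [NontriviallyNormedField 𝕜]
  [SeminormedAddCommGroup X] [NormedSpace 𝕜 X] [SeminormedAddCommGroup W] [NormedSpace 𝕜 W]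
  [SeminormedAddCommGroup Y] [NormedSpace 𝕜 Y] [SeminormedAddCommGroup Z] [NormedSpace 𝕜 Z]

theorem ContinuousLinearMap.norm_apply_le_norm_apply_add_opNorm_sub_mul (A A' : X →L[𝕜] Y)
    (w : X) : ‖A w‖ ≤ ‖A' w‖ + ‖A' - A‖ * ‖w‖ :=
  calc ‖A w‖ ≤ ‖A' w‖ + ‖(A' - A) w‖ := by
        simpa only [sub_apply, norm_sub_rev] using norm_le_insert' (A w) (A' w)
    _ ≤ ‖A' w‖ + ‖A' - A‖ * ‖w‖ := by gcongr; exact (A' - A).le_opNorm w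

def HasRegularityEstimate (A : X →L[𝕜] Y) (B : X →L[𝕜] Z) (ι : X →L[𝕜] W) (c : ℝ) : Prop :=
  ∀ w, ‖w‖ ≤ c * (‖A w‖ + ‖ι w‖ + ‖B w‖)

namespace HasRegularityEstimate

variable {A A' : X →L[𝕜] Y} {B B' : X →L[𝕜] Z} {ι : X →L[𝕜] W} {c c' : ℝ}

theorem mono (h : HasRegularityEstimate A B ι c) (hcc' : c ≤ c') :
    HasRegularityEstimate A B ι c' := fun w =>
  (h w).trans (mul_le_mul_of_nonneg_right hcc' (by positivity))

theorem of_perturbation (h : HasRegularityEstimate A B ι c) (hc : 0 ≤ c)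
    (hsmall : c * (‖A' - A‖ + ‖B' - B‖) ≤ 1 / 2) :
    HasRegularityEstimate A' B' ι (2 * c) := by
  intro w
  have hw : ‖w‖ ≤ c * (‖A' w‖ + ‖ι w‖ + ‖B' w‖) + c * (‖A' - A‖ + ‖B' - B‖) * ‖w‖ :=
    calc ‖w‖ ≤ c * (‖A w‖ + ‖ι w‖ + ‖B w‖) := h w
      _ ≤ c * ((‖A' w‖ + ‖A' - A‖ * ‖w‖) + ‖ι w‖ + (‖B' w‖ + ‖B' - B‖ * ‖w‖)) := by
        gcongr <;> exact ContinuousLinearMap.norm_apply_le_norm_apply_add_opNorm_sub_mul _ _ w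
      _ = _ := by ring
  nlinarith [norm_nonneg w]

end HasRegularityEstimate

theorem Continuous.eventually_hasRegularityEstimate_nhds {S : Type*} [TopologicalSpace S]
    {D : S → X →L[𝕜] Y} {C : S → X →L[𝕜] Z} (hD : Continuous D) (hC : Continuous C)
    {ι : X →L[𝕜] W} {s : S} {c : ℝ} (hs : HasRegularityEstimate (D s) (C s) ι c) (hc : 0 ≤ c) :
    ∀ᶠ t in 𝓝 s, HasRegularityEstimate (D t) (C t) ι (2 * c) := by
  have hdist : Continuous fun t => c * (‖D t - D s‖ + ‖C t - C s‖) := by fun_prop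
  have hnear : ∀ᶠ t in 𝓝 s, c * (‖D t - D s‖ + ‖C t - C s‖) < 1 / 2 :=
    hdist.continuousAt.eventually_lt continuousAt_const (by simp)
  exact hnear.mono fun t ht => hs.of_perturbation hc ht.le

end RegularityEstimate

theorem stmt13_general
    {S : Type*} [MetricSpace S] [CompactSpace S]
    {X₀ X₁ Y₁ Y₂ : Type*}
    [NormedAddCommGroup X₀] [NormedSpace ℝ X₀]
    [NormedAddCommGroup X₁] [NormedSpace ℝ X₁]
    [NormedAddCommGroup Y₁] [NormedSpace ℝ Y₁]
    [NormedAddCommGroup Y₂] [NormedSpace ℝ Y₂]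
    (D : S → X₁ →L[ℝ] Y₁) (C : S → X₁ →L[ℝ] Y₂)
    (hD : Continuous D) (hC : Continuous C)
    (ι : X₁ →L[ℝ] X₀)
    (hreg : ∀ s : S, ∃ c : ℝ, 0 < c ∧ ∀ w : X₁,
      ‖w‖ ≤ c * (‖D s w‖ + ‖ι w‖ + ‖C s w‖)) :
    ∃ c : ℝ, 0 < c ∧ ∀ (s : S) (w : X₁),
      ‖w‖ ≤ c * (‖D s w‖ + ‖ι w‖ + ‖C s w‖) := by
  obtain ⟨c, hc⟩ := CompactSpace.exists_forall_of_forall_eventually_nhds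
    (P := fun c s => HasRegularityEstimate (D s) (C s) ι c) (fun _ _ _ hcc' h => h.mono hcc')
    fun s => by
      obtain ⟨c, hc, hest⟩ := hreg s
      exact ⟨2 * c, hD.eventually_hasRegularityEstimate_nhds hC hest hc.le⟩
  exact ⟨max c 1, by positivity, fun s => (hc s).mono (le_max_left c 1)⟩

/-- Let `S` be a compact metric space and `s ↦ (D_s, C_s)` a norm-continuous
family of bounded operators `D_s : X₁ → Y₁`, `C_s : X₁ → Y₂` between Banach spaces, and
`ι : X₁ → X₀` a continuous injection. If for each `s` there is `c_s > 0` with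
`‖w‖ ≤ c_s(‖D_s w‖ + ‖w‖_{X₀} + ‖C_s w‖)` for all `w ∈ X₁`, then a single constant
`c > 0` works for all `s ∈ S` simultaneously. -/
theorem stmt13
    {S : Type*} [MetricSpace S] [CompactSpace S]
    {X₀ X₁ Y₁ Y₂ : Type*}
    [NormedAddCommGroup X₀] [NormedSpace ℝ X₀]
    [NormedAddCommGroup X₁] [NormedSpace ℝ X₁] [CompleteSpace X₁]
    [NormedAddCommGroup Y₁] [NormedSpace ℝ Y₁] [CompleteSpace Y₁]
    [NormedAddCommGroup Y₂] [NormedSpace ℝ Y₂] [CompleteSpace Y₂]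
    (D : S → X₁ →L[ℝ] Y₁) (C : S → X₁ →L[ℝ] Y₂)
    (hD : Continuous D) (hC : Continuous C)
    (ι : X₁ →L[ℝ] X₀) (hι : Function.Injective ι)
    (hreg : ∀ s : S, ∃ c : ℝ, 0 < c ∧ ∀ w : X₁,
      ‖w‖ ≤ c * (‖D s w‖ + ‖ι w‖ + ‖C s w‖)) :
    ∃ c : ℝ, 0 < c ∧ ∀ (s : S) (w : X₁),
      ‖w‖ ≤ c * (‖D s w‖ + ‖ι w‖ + ‖C s w‖) :=
  stmt13_general D C hD hC ι hreg
end
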